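/- arXiv:1801.01778 — 3 statements merged into one kernel-verified Lean document; each statement's English description precedes it below -/
import Mathlib

section
/- Let f : E → ℝ be a differentiable strictly convex function on a finite-dimensional real inner product space E. Then the image of the gradient map ∇f : E → E is an open convex subset of E. -/
/-!
A slope `y` is a value of `∇f` exactly when the tilted function `f - ⟪y, ·⟫` grows at least
linearly at infinity. If it does, it attains its minimum (we are in finite dimension), where its
gradient `∇f - y` vanishes. Conversely, if `∇f z = y` then `z` is a strict global minimum of the
strictly convex tilt; by compactness the tilt exceeds its minimum by some `δ > 0` on the unit
sphere around `z`, hence by convexity by `δ (‖x - z‖ - 1)` at every `x`. Linear growth of the tilt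
is an open condition on `y` (a perturbation of size `< δ` costs less than `δ ‖x‖`) and a convex
one (the tilt is affine in `y`).
-/

open Set Filter Metric InnerProductSpace
open scoped RealInnerProductSpace

theorem StrictConvexOn.lt_of_isMinOn {𝕜 M β : Type*} [Field 𝕜] [LinearOrder 𝕜]
    [IsStrictOrderedRing 𝕜] [AddCommMonoid M] [Module 𝕜 M] [AddCommMonoid β] [LinearOrder β]
    [IsOrderedAddMonoid β] [Module 𝕜 β] [PosSMulMono 𝕜 β] {f : M → β} {s : Set M} {x z : M}
    (hf : StrictConvexOn 𝕜 s f) (hz : IsMinOn f s z) (hzs : z ∈ s) (hxs : x ∈ s) (hxz : x ≠ z) :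
    f z < f x := by
  by_contra! h
  exact hxz (hf.eq_of_isMinOn (fun w hw => h.trans (hz hw)) hz hxs hzs)

section NormedSpace

variable {F : Type*} [NormedAddCommGroup F] [NormedSpace ℝ F]

theorem ConvexOn.add_le_of_hasFDerivAt {f : F → ℝ} {f' : F →L[ℝ] ℝ} {x : F}
    (hf : ConvexOn ℝ univ f) (hx : HasFDerivAt f f' x) (y : F) : f x + f' (y - x) ≤ f y := by
  let ℓ : ℝ →ᵃ[ℝ] F := AffineMap.lineMap x y
  have hline : ConvexOn ℝ univ (f ∘ ℓ) := by simpa using hf.comp_affineMap ℓ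
  have hderiv : HasDerivAt (f ∘ ℓ) (f' (y - x)) 0 :=
    hx.comp_hasDerivAt_of_eq (0 : ℝ) AffineMap.hasDerivAt_lineMap (by simp [ℓ])
  have := hline.le_slope_of_hasDerivAt (mem_univ 0) (mem_univ 1) one_pos hderiv
  simp only [slope_def_field, Function.comp_apply, ℓ, AffineMap.lineMap_apply_zero,
    AffineMap.lineMap_apply_one, sub_zero, div_one] at this
  linarith

theorem ConvexOn.le_of_isMinOn_of_forall_sphere {φ : F → ℝ} {z : F} {δ : ℝ}
    (hφ : ConvexOn ℝ univ φ) (hz : IsMinOn φ univ z) (hδ : 0 ≤ δ)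
    (hsphere : ∀ u ∈ sphere z 1, φ z + δ ≤ φ u) (x : F) :
    φ z + δ * (‖x - z‖ - 1) ≤ φ x := by
  have hmin := isMinOn_univ_iff.1 hz x
  rcases le_or_gt ‖x - z‖ 1 with hx | hx
  · nlinarith
  set R := ‖x - z‖
  have hR : 0 < R := one_pos.trans hx
  have hu : (1 - R⁻¹) • z + R⁻¹ • x ∈ sphere z 1 := by
    have : (1 - R⁻¹) • z + R⁻¹ • x - z = R⁻¹ • (x - z) := by module
    simp [this, norm_smul, hR.ne', R]
  have hconv := hφ.2 (mem_univ z) (mem_univ x) (sub_nonneg.2 (inv_le_one_of_one_le₀ hx.le))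
    (inv_nonneg.2 hR.le) (sub_add_cancel 1 R⁻¹)
  have hslope : δ * R ≤ φ x - φ z := by
    have := (hsphere _ hu).trans hconv
    rw [smul_eq_mul, smul_eq_mul] at this
    calc δ * R ≤ R⁻¹ * (φ x - φ z) * R := by gcongr; linarith
      _ = φ x - φ z := by field_simp
  nlinarith

end NormedSpace

section InnerProductSpace

variable {E : Type*} [NormedAddCommGroup E] [InnerProductSpace ℝ E]

def linearGrowthSlopes (f : E → ℝ) : Set E :=
  {y | ∃ δ > 0, ∃ c, ∀ x, δ * ‖x‖ - c ≤ f x - ⟪y, x⟫}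

theorem isOpen_linearGrowthSlopes (f : E → ℝ) : IsOpen (linearGrowthSlopes f) := by
  refine Metric.isOpen_iff.2 fun y ⟨δ, hδ, c, hc⟩ => ⟨δ, hδ, fun y' hy' => ?_⟩
  rw [mem_ball, dist_eq_norm] at hy'
  refine ⟨δ - ‖y' - y‖, sub_pos.2 hy', c, fun x => ?_⟩
  have hCS := real_inner_le_norm (y' - y) x
  have := hc x
  rw [inner_sub_left] at hCS
  nlinarith

theorem convex_linearGrowthSlopes (f : E → ℝ) : Convex ℝ (linearGrowthSlopes f) := by
  rintro y₁ ⟨δ₁, hδ₁, c₁, hc₁⟩ y₂ ⟨δ₂, hδ₂, c₂, hc₂⟩ a b ha hb hab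
  refine ⟨a * δ₁ + b * δ₂, ?_, a * c₁ + b * c₂, fun x => ?_⟩
  · rcases ha.eq_or_lt with rfl | ha
    · simp_all
    · positivity
  · have h₁ := mul_le_mul_of_nonneg_left (hc₁ x) ha
    have h₂ := mul_le_mul_of_nonneg_left (hc₂ x) hb
    have hsplit : f x - ⟪a • y₁ + b • y₂, x⟫ = a * (f x - ⟪y₁, x⟫) + b * (f x - ⟪y₂, x⟫) := by
      rw [inner_add_left, real_inner_smul_left, real_inner_smul_left]
      linear_combination -(f x) * hab
    rw [hsplit]
    linarith

theorem mem_range_gradient_of_mem_linearGrowthSlopes [ProperSpace E] {f : E → ℝ}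
    (hf : Differentiable ℝ f) {y : E} (hy : y ∈ linearGrowthSlopes f) :
    y ∈ range (gradient f) := by
  obtain ⟨δ, hδ, c, hc⟩ := hy
  have hcont : Continuous fun x => f x - ⟪y, x⟫ := hf.continuous.sub (by fun_prop)
  have htends : Tendsto (fun x => f x - ⟪y, x⟫) (cocompact E) atTop :=
    tendsto_atTop_mono hc <|
      tendsto_atTop_add_const_right _ _ (tendsto_norm_cocompact_atTop.const_mul_atTop hδ)
  obtain ⟨z, hz⟩ := hcont.exists_forall_le htends
  have hderiv : HasFDerivAt (fun x => f x - ⟪y, x⟫) (toDual ℝ E (gradient f z - y)) z := by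
    rw [map_sub]
    exact (hf z).hasGradientAt.hasFDerivAt.sub (innerSL ℝ y).hasFDerivAt
  have := ((isMinOn_univ_iff.2 hz).isLocalMin univ_mem).hasFDerivAt_eq_zero hderiv
  exact ⟨z, sub_eq_zero.1 ((toDual ℝ E).map_eq_zero_iff.1 this)⟩

theorem StrictConvexOn.mem_linearGrowthSlopes_of_hasGradientAt [FiniteDimensional ℝ E]
    {f : E → ℝ} (hf : StrictConvexOn ℝ univ f) {y z : E} (hz : HasGradientAt f y z) :
    y ∈ linearGrowthSlopes f := by
  set φ := fun x => f x - ⟪y, x⟫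
  have hφ : StrictConvexOn ℝ univ φ := hf.sub_concaveOn ((innerₛₗ ℝ y).concaveOn convex_univ)
  have hφcont : Continuous φ := continuousOn_univ.1 (hφ.convexOn.continuousOn isOpen_univ)
  have hmin : IsMinOn φ univ z := isMinOn_univ_iff.2 fun x => by
    have := hf.convexOn.add_le_of_hasFDerivAt hz.hasFDerivAt x
    rw [toDual_apply_apply, inner_sub_right] at this
    linarith
  obtain ⟨a, hza, hsphere⟩ := (isCompact_sphere z 1).exists_forall_le' hφcont.continuousOn
    fun u hu => hφ.lt_of_isMinOn hmin (mem_univ z) (mem_univ u) (ne_of_mem_sphere hu one_ne_zero)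
  have hgrowth := hφ.convexOn.le_of_isMinOn_of_forall_sphere hmin (sub_nonneg.2 hza.le)
    fun u hu => (add_sub_cancel _ a).trans_le (hsphere u hu)
  refine ⟨a - φ z, sub_pos.2 hza, (a - φ z) * (‖z‖ + 1) - φ z, fun x => ?_⟩
  nlinarith [hgrowth x, norm_sub_norm_le x z]

theorem StrictConvexOn.range_gradient_eq_linearGrowthSlopes [FiniteDimensional ℝ E] {f : E → ℝ}
    (hf : StrictConvexOn ℝ univ f) (hdiff : Differentiable ℝ f) :
    range (gradient f) = linearGrowthSlopes f := by
  refine Subset.antisymm ?_ fun y hy => mem_range_gradient_of_mem_linearGrowthSlopes hdiff hy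
  rintro _ ⟨z, rfl⟩
  exact hf.mem_linearGrowthSlopes_of_hasGradientAt (hdiff z).hasGradientAt

end InnerProductSpace

/-- The image of the gradient of a differentiable strictly convex function on a
finite-dimensional real inner product space is an open convex set. -/
theorem stmt_0 {E : Type*} [NormedAddCommGroup E] [InnerProductSpace ℝ E]
    [FiniteDimensional ℝ E] (f : E → ℝ) (hdiff : Differentiable ℝ f)
    (hconv : StrictConvexOn ℝ Set.univ f) :
    IsOpen (Set.range (gradient f)) ∧ Convex ℝ (Set.range (gradient f)) := by
  rw [hconv.range_gradient_eq_linearGrowthSlopes hdiff]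
  exact ⟨isOpen_linearGrowthSlopes f, convex_linearGrowthSlopes f⟩
end

section
/- Let 𝔞 be a finite-dimensional real inner product space, regarded as an abelian group A = 𝔞 under addition, acting on a topological space X, let x ∈ X, and let Ψ : X × 𝔞 → ℝ satisfy: (i) Ψ(x, ·) is smooth, (ii) the additive cocycle condition Ψ(x, v) + Ψ(v·x, w) = Ψ(x, v + w), and (iii) for any v, w ∈ 𝔞 with w ∉ 𝔞_x (the Lie algebra of the stabilizer), d²/dt²|_{t=0} Ψ(x, v + tw) > 0, while if w ∈ 𝔞_x then this second derivative vanishes. Define μ(y) ∈ 𝔞 by ⟨μ(y), ξ⟩ = d/dt|_{t=0} Ψ(y, tξ). Then μ(A·x) is an open convex subset of the affine subspace μ(x) + 𝔞_x^⊥, where 𝔞_x^⊥ is the orthogonal complement of the stabilizer subalgebra 𝔞_x. -/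
open scoped RealInnerProductSpace

set_option linter.unusedSectionVars false


section Aux

variable {𝔞 : Type*} [NormedAddCommGroup 𝔞] [InnerProductSpace ℝ 𝔞] [FiniteDimensional ℝ 𝔞]

private lemma KNlineD (f : 𝔞 → ℝ) (hf : ContDiff ℝ (⊤ : ℕ∞) f) (v w : 𝔞) (t : ℝ) :
    HasDerivAt (fun t : ℝ => f (v + t • w)) (fderiv ℝ f (v + t • w) w) t := by
  have h1 : HasDerivAt (fun t : ℝ => v + t • w) w t := by
    simpa using ((hasDerivAt_id t).smul_const w).const_add v
  have h2 := (hf.differentiable (by simp) (v + t • w)).hasFDerivAt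
  exact h2.comp_hasDerivAt t h1

private lemma KNderivLine (f : 𝔞 → ℝ) (hf : ContDiff ℝ (⊤ : ℕ∞) f) (v w : 𝔞) :
    deriv (fun t : ℝ => f (v + t • w)) = fun t => fderiv ℝ f (v + t • w) w :=
  funext fun t => (KNlineD f hf v w t).deriv

private lemma KNlineDH (f : 𝔞 → ℝ) (hf : ContDiff ℝ (⊤ : ℕ∞) f) (m v w : 𝔞) (t : ℝ) :
    HasDerivAt (fun t : ℝ => f (v + t • w) - ⟪m, v + t • w⟫)
      (fderiv ℝ f (v + t • w) w - ⟪m, w⟫) t := by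
  have h2 : HasDerivAt (fun t : ℝ => ⟪m, v + t • w⟫) ⟪m, w⟫ t := by
    have e : (fun t : ℝ => ⟪m, v + t • w⟫) = fun t => ⟪m, v⟫ + t * ⟪m, w⟫ := by
      funext u; simp [inner_add_right, inner_smul_right]
    rw [e]
    simpa using ((hasDerivAt_id t).mul_const ⟪m, w⟫).const_add ⟪m, v⟫
  exact (KNlineD f hf v w t).sub h2

variable (f : 𝔞 → ℝ) (s : Submodule ℝ 𝔞) (c : 𝔞)

/-- strict monotonicity of the directional derivative along a non-stabilizer direction -/
private lemma KNmono (hf : ContDiff ℝ (⊤ : ℕ∞) f)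
    (hP : ∀ v w : 𝔞, w ∉ s → ∀ t₀ : ℝ, 0 < deriv (deriv fun t : ℝ => f (v + t • w)) t₀)
    (v w : 𝔞) (hw : w ∉ s) :
    StrictMono fun t : ℝ => fderiv ℝ f (v + t • w) w := by
  rw [show (fun t : ℝ => fderiv ℝ f (v + t • w) w) = deriv (fun t : ℝ => f (v + t • w)) from
    (KNderivLine f hf v w).symm]
  exact strictMono_of_deriv_pos (hP v w hw)

/-- strict minimum along a non-stabilizer line from a critical direction -/
private lemma KNstrictMin (hf : ContDiff ℝ (⊤ : ℕ∞) f)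
    (hP : ∀ v w : 𝔞, w ∉ s → ∀ t₀ : ℝ, 0 < deriv (deriv fun t : ℝ => f (v + t • w)) t₀)
    (m v w : 𝔞) (hw : w ∉ s) (hcrit : fderiv ℝ f v w = ⟪m, w⟫) (t : ℝ) (ht : t ≠ 0) :
    f v - ⟪m, v⟫ < f (v + t • w) - ⟪m, v + t • w⟫ := by
  set φ := fun t : ℝ => f (v + t • w) - ⟪m, v + t • w⟫ with hφ
  have hder : ∀ u : ℝ, HasDerivAt φ (fderiv ℝ f (v + u • w) w - ⟪m, w⟫) u :=
    fun u => KNlineDH f hf m v w u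
  have hderiv : ∀ u : ℝ, deriv φ u = fderiv ℝ f (v + u • w) w - ⟪m, w⟫ :=
    fun u => (hder u).deriv
  have hmono := KNmono f s hf hP v w hw
  have hcont : Continuous φ := by
    have : Differentiable ℝ φ := fun u => (hder u).differentiableAt
    exact this.continuous
  have hφ0 : φ 0 = f v - ⟪m, v⟫ := by simp [hφ]
  have hD0 : fderiv ℝ f (v + (0 : ℝ) • w) w = ⟪m, w⟫ := by simpa using hcrit
  rcases ht.lt_or_gt with h | h
  · have hanti : StrictAntiOn φ (Set.Iic (0 : ℝ)) := by
      apply strictAntiOn_of_deriv_neg (convex_Iic (0 : ℝ)) hcont.continuousOn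
      intro u hu
      rw [interior_Iic] at hu
      rw [hderiv u]
      have h5 := hmono (show u < (0 : ℝ) from hu)
      simp only at h5
      rw [hD0] at h5
      linarith
    have := hanti (Set.mem_Iic.mpr h.le) (Set.mem_Iic.mpr le_rfl) h
    rw [hφ0] at this; exact this
  · have hmonoOn : StrictMonoOn φ (Set.Ici (0 : ℝ)) := by
      apply strictMonoOn_of_deriv_pos (convex_Ici (0 : ℝ)) hcont.continuousOn
      intro u hu
      rw [interior_Ici] at hu
      rw [hderiv u]
      have h5 := hmono (show (0 : ℝ) < u from hu)
      simp only at h5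
      rw [hD0] at h5
      linarith
    have := hmonoOn (Set.mem_Ici.mpr le_rfl) (Set.mem_Ici.mpr h.le) h
    rw [hφ0] at this; exact this

/-- directional derivative along stabilizer directions -/
private lemma KNfderiv_s (hf : ContDiff ℝ (⊤ : ℕ∞) f)
    (hA : ∀ w ∈ s, ∀ (v : 𝔞) (t : ℝ), f (v + t • w) = f v + t * ⟪c, w⟫)
    {w : 𝔞} (hw : w ∈ s) (v : 𝔞) : fderiv ℝ f v w = ⟪c, w⟫ := by
  have h1 := KNlineD f hf v w 0
  rw [show (fun t : ℝ => f (v + t • w)) = fun t : ℝ => f v + t * ⟪c, w⟫ from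
    funext fun t => hA w hw v t] at h1
  have h2 : HasDerivAt (fun t : ℝ => f v + t * ⟪c, w⟫) ⟪c, w⟫ 0 := by
    simpa using ((hasDerivAt_id (0 : ℝ)).mul_const ⟪c, w⟫).const_add (f v)
  have := h1.unique h2
  simpa using this

/-- gradient inequality: a critical point is a global minimum, strict off the s-translate -/
private lemma KNglobMin (hf : ContDiff ℝ (⊤ : ℕ∞) f)
    (hA : ∀ w ∈ s, ∀ (v : 𝔞) (t : ℝ), f (v + t • w) = f v + t * ⟪c, w⟫)
    (hP : ∀ v w : 𝔞, w ∉ s → ∀ t₀ : ℝ, 0 < deriv (deriv fun t : ℝ => f (v + t • w)) t₀)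
    (m a : 𝔞) (hcrit : ∀ ξ, ⟪m, ξ⟫ = fderiv ℝ f a ξ) (v : 𝔞) :
    f a - ⟪m, a⟫ ≤ f v - ⟪m, v⟫ ∧ (v - a ∉ s → f a - ⟪m, a⟫ < f v - ⟪m, v⟫) := by
  have hva : a + (1 : ℝ) • (v - a) = v := by simp
  by_cases hu : v - a ∈ s
  · constructor
    · have h1 := hA (v - a) hu a 1
      rw [hva] at h1
      have h3 : ⟪m, v - a⟫ = ⟪c, v - a⟫ := by
        rw [hcrit (v - a), KNfderiv_s f s c hf hA hu a]
      have h2 : ⟪m, v - a⟫ = ⟪m, v⟫ - ⟪m, a⟫ := inner_sub_right m v a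
      linarith
    · intro h; exact absurd hu h
  · have := KNstrictMin f s hf hP m a (v - a) hu ((hcrit (v - a)).symm) 1 one_ne_zero
    rw [hva] at this
    exact ⟨this.le, fun _ => this⟩

/-- a minimum over `sᗮ` of `f - ⟪m,·⟫` (with `m` compatible on `s`) is a critical point -/
private lemma KNminCrit (hf : ContDiff ℝ (⊤ : ℕ∞) f)
    (hA : ∀ w ∈ s, ∀ (v : 𝔞) (t : ℝ), f (v + t • w) = f v + t * ⟪c, w⟫)
    (m : 𝔞) (hm : ∀ w ∈ s, ⟪m, w⟫ = ⟪c, w⟫) (v₀ : 𝔞) (hv₀ : v₀ ∈ sᗮ)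
    (hmin : ∀ v ∈ sᗮ, f v₀ - ⟪m, v₀⟫ ≤ f v - ⟪m, v⟫) :
    ∀ ξ, ⟪m, ξ⟫ = fderiv ℝ f v₀ ξ := by
  intro ξ
  obtain ⟨p, hp, q, hq, rfl⟩ := s.exists_add_mem_mem_orthogonal ξ
  have h1 : fderiv ℝ f v₀ p = ⟪m, p⟫ := by
    rw [KNfderiv_s f s c hf hA hp v₀, hm p hp]
  have h2 : fderiv ℝ f v₀ q = ⟪m, q⟫ := by
    have hloc : IsLocalMin (fun t : ℝ => f (v₀ + t • q) - ⟪m, v₀ + t • q⟫) 0 := by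
      apply Filter.Eventually.of_forall
      intro t
      simp only [zero_smul, add_zero]
      exact hmin (v₀ + t • q) (Submodule.add_mem _ hv₀ (Submodule.smul_mem _ t hq))
    have hz := hloc.deriv_eq_zero
    rw [(KNlineDH f hf m v₀ q 0).deriv] at hz
    simp only [zero_smul, add_zero] at hz
    linarith
  rw [inner_add_right, map_add, h1, h2]

/-- existence of a critical point given a coercivity bound over `sᗮ` -/
private lemma KNexistsCrit (hf : ContDiff ℝ (⊤ : ℕ∞) f)
    (hA : ∀ w ∈ s, ∀ (v : 𝔞) (t : ℝ), f (v + t • w) = f v + t * ⟪c, w⟫)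
    (m b : 𝔞) (R : ℝ) (hm : ∀ w ∈ s, ⟪m, w⟫ = ⟪c, w⟫) (hb : b ∈ sᗮ)
    (hcoer : ∀ v ∈ sᗮ, R ≤ ‖v - b‖ → f b - ⟪m, b⟫ < f v - ⟪m, v⟫) :
    ∃ v₀ : 𝔞, ∀ ξ, ⟪m, ξ⟫ = fderiv ℝ f v₀ ξ := by
  have hcont : Continuous fun v : 𝔞 => f v - ⟪m, v⟫ :=
    (hf.continuous).sub (continuous_const.inner continuous_id)
  set K := (sᗮ : Set 𝔞) ∩ Metric.closedBall b (max R 1) with hK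
  have hbK : b ∈ K := by
    refine ⟨hb, Metric.mem_closedBall_self ?_⟩
    have : (1 : ℝ) ≤ max R 1 := le_max_right R 1
    linarith
  have hKc : IsCompact K :=
    (isCompact_closedBall b _).inter_left (Submodule.closed_of_finiteDimensional sᗮ)
  obtain ⟨v₀, hv₀K, hminK⟩ := hKc.exists_isMinOn ⟨b, hbK⟩ hcont.continuousOn
  have hminK' : ∀ y ∈ K, f v₀ - ⟪m, v₀⟫ ≤ f y - ⟪m, y⟫ := fun y hy => hminK hy
  refine ⟨v₀, KNminCrit f s c hf hA m hm v₀ hv₀K.1 ?_⟩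
  intro v hv
  by_cases hball : v ∈ Metric.closedBall b (max R 1)
  · exact hminK' v ⟨hv, hball⟩
  · have h1 : max R 1 < ‖v - b‖ := by
      simpa [Metric.mem_closedBall, dist_eq_norm] using hball
    have h2 := hcoer v hv ((le_max_left R 1).trans h1.le)
    exact (hminK' b hbK).trans h2.le

/-- one can move a critical point into `sᗮ` -/
private lemma KNcritProj (hf : ContDiff ℝ (⊤ : ℕ∞) f)
    (hA : ∀ w ∈ s, ∀ (v : 𝔞) (t : ℝ), f (v + t • w) = f v + t * ⟪c, w⟫)
    (hP : ∀ v w : 𝔞, w ∉ s → ∀ t₀ : ℝ, 0 < deriv (deriv fun t : ℝ => f (v + t • w)) t₀)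
    (m a : 𝔞) (ha : ∀ ξ, ⟪m, ξ⟫ = fderiv ℝ f a ξ) :
    ∃ b : 𝔞, b ∈ sᗮ ∧ ∀ ξ, ⟪m, ξ⟫ = fderiv ℝ f b ξ := by
  have hm : ∀ w ∈ s, ⟪m, w⟫ = ⟪c, w⟫ := fun w hw => by
    rw [ha w, KNfderiv_s f s c hf hA hw a]
  obtain ⟨p, hp, b, hb, hab⟩ := s.exists_add_mem_mem_orthogonal a
  have hba : a + (-1 : ℝ) • p = b := by rw [hab]; module
  have hfb : f b - ⟪m, b⟫ = f a - ⟪m, a⟫ := by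
    have h1 : f b = f a + (-1) * ⟪c, p⟫ := by rw [← hba]; exact hA p hp a (-1)
    have h2 : ⟪m, b⟫ = ⟪m, a⟫ + (-1) * ⟪m, p⟫ := by
      rw [← hba, inner_add_right, inner_smul_right]
    have h3 : ⟪m, p⟫ = ⟪c, p⟫ := hm p hp
    rw [h1, h2, h3]; ring
  have hminb : ∀ v ∈ sᗮ, f b - ⟪m, b⟫ ≤ f v - ⟪m, v⟫ := by
    intro v _
    rw [hfb]
    exact (KNglobMin f s c hf hA hP m a ha v).1
  exact ⟨b, hb, KNminCrit f s c hf hA m hm b hb hminb⟩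

/-- linear growth of `f - ⟪m,·⟫` away from a critical point in `sᗮ` -/
private lemma KNgrowth (hf : ContDiff ℝ (⊤ : ℕ∞) f)
    (hA : ∀ w ∈ s, ∀ (v : 𝔞) (t : ℝ), f (v + t • w) = f v + t * ⟪c, w⟫)
    (hP : ∀ v w : 𝔞, w ∉ s → ∀ t₀ : ℝ, 0 < deriv (deriv fun t : ℝ => f (v + t • w)) t₀)
    (m b : 𝔞) (hb : b ∈ sᗮ) (hcb : ∀ ξ, ⟪m, ξ⟫ = fderiv ℝ f b ξ) :
    ∃ δ : ℝ, 0 < δ ∧ ∀ v ∈ sᗮ, 1 ≤ ‖v - b‖ →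
      f b - ⟪m, b⟫ + δ * ‖v - b‖ ≤ f v - ⟪m, v⟫ := by
  have hnots : ∀ u : 𝔞, u ∈ sᗮ → u ≠ 0 → u ∉ s := by
    intro u hu hne hus
    exact hne (inner_self_eq_zero.mp ((Submodule.mem_orthogonal s u).mp hu u hus))
  set S := (sᗮ : Set 𝔞) ∩ Metric.sphere (0 : 𝔞) 1 with hS
  by_cases hne : S.Nonempty
  · have hScomp : IsCompact S :=
      (isCompact_sphere 0 1).inter_left (Submodule.closed_of_finiteDimensional sᗮ)
    have hcont : Continuous fun u : 𝔞 => f (b + u) - ⟪m, b + u⟫ := by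
      exact ((hf.continuous).sub (continuous_const.inner continuous_id)).comp
        (continuous_const.add continuous_id)
    obtain ⟨u₀, hu₀S, hminS⟩ := hScomp.exists_isMinOn hne hcont.continuousOn
    have hminS' : ∀ u ∈ S, f (b + u₀) - ⟪m, b + u₀⟫ ≤ f (b + u) - ⟪m, b + u⟫ :=
      fun u hu => hminS hu
    have hu₀n : ‖u₀‖ = 1 := by
      have := hu₀S.2; simpa [Metric.mem_sphere, dist_eq_norm] using this
    have hu₀ne : u₀ ≠ 0 := by intro h; rw [h] at hu₀n; simp at hu₀n
    have hu₀s : u₀ ∉ s := hnots u₀ hu₀S.1 hu₀ne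
    set δ := (f (b + u₀) - ⟪m, b + u₀⟫) - (f b - ⟪m, b⟫) with hδdef
    have hδ : 0 < δ := by
      have := KNstrictMin f s hf hP m b u₀ hu₀s ((hcb u₀).symm) 1 one_ne_zero
      simp only [one_smul] at this
      simp only [hδdef]
      linarith
    refine ⟨δ, hδ, ?_⟩
    intro v hv hr1
    set r := ‖v - b‖ with hrdef
    have hr0 : (0 : ℝ) < r := lt_of_lt_of_le one_pos hr1
    set w := v - b with hwdef
    have hwo : w ∈ sᗮ := Submodule.sub_mem _ hv hb
    have hrw : (0 : ℝ) < ‖w‖ := by rw [← hrdef]; exact hr0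
    have hwne : w ≠ 0 := by
      intro h
      rw [h, norm_zero] at hrw
      exact lt_irrefl _ hrw
    have hws : w ∉ s := hnots w hwo hwne
    set φ := fun t : ℝ => f (b + t • w) - ⟪m, b + t • w⟫ with hφdef
    have hder : ∀ u : ℝ, HasDerivAt φ (fderiv ℝ f (b + u • w) w - ⟪m, w⟫) u :=
      fun u => KNlineDH f hf m b w u
    have hφdiff : Differentiable ℝ φ := fun u => (hder u).differentiableAt
    have hconv : StrictConvexOn ℝ Set.univ φ := by
      apply strictConvexOn_of_deriv2_pos' convex_univ hφdiff.continuous.continuousOn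
      intro t _
      have e1 : deriv φ = fun u : ℝ => fderiv ℝ f (b + u • w) w - ⟪m, w⟫ :=
        funext fun u => (hder u).deriv
      have e2 : deriv (deriv φ) t = deriv (deriv fun u : ℝ => f (b + u • w)) t := by
        rw [e1]
        have e4 : deriv (fun u : ℝ => fderiv ℝ f (b + u • w) w - ⟪m, w⟫) t
            = deriv (fun u : ℝ => fderiv ℝ f (b + u • w) w) t := deriv_sub_const _
        rw [e4, ← KNderivLine f hf b w]
      have e3 : deriv^[2] φ = deriv (deriv φ) := by
        simp [Function.iterate_succ, Function.iterate_zero, Function.comp]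
      rw [e3, e2]
      exact hP b w hws t
    have h5 : (0 : ℝ) ≤ 1 - r⁻¹ := by
      have h6 : r⁻¹ ≤ 1 := by
        rw [inv_le_one_iff₀]; right; exact hr1
      linarith
    have hcombo : φ ((1 - r⁻¹) • (0 : ℝ) + r⁻¹ • 1)
        ≤ (1 - r⁻¹) • φ 0 + r⁻¹ • φ 1 :=
      hconv.convexOn.2 (Set.mem_univ (0 : ℝ)) (Set.mem_univ (1 : ℝ)) h5
        (by positivity) (by ring)
    simp only [smul_eq_mul, mul_zero, mul_one, zero_add] at hcombo
    have hφ0 : φ 0 = f b - ⟪m, b⟫ := by simp [hφdef]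
    have hφ1 : φ 1 = f v - ⟪m, v⟫ := by
      have : b + (1 : ℝ) • w = v := by rw [hwdef]; module
      simp only [hφdef, this]
    have hmid : f b - ⟪m, b⟫ + δ ≤ φ r⁻¹ := by
      have humem : r⁻¹ • w ∈ S := by
        constructor
        · exact Submodule.smul_mem _ _ hwo
        · have : ‖r⁻¹ • w‖ = 1 := by
            rw [norm_smul, ← hrdef]
            simp only [norm_inv, Real.norm_eq_abs, abs_of_pos hr0]
            exact inv_mul_cancel₀ hr0.ne'
          simpa [Metric.mem_sphere, dist_eq_norm] using this
      have := hminS' _ humem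
      simp only [hφdef]
      simp only [hδdef] at *
      linarith
    rw [hφ0, hφ1] at hcombo
    -- hcombo : φ r⁻¹ ≤ (1 - r⁻¹) * (f b - ⟪m,b⟫) + r⁻¹ * (f v - ⟪m,v⟫)
    have hrr : r * r⁻¹ = 1 := mul_inv_cancel₀ hr0.ne'
    have hexp : (1 - r⁻¹) * (f b - ⟪m, b⟫) + r⁻¹ * (f v - ⟪m, v⟫)
        = (f b - ⟪m, b⟫) + r⁻¹ * ((f v - ⟪m, v⟫) - (f b - ⟪m, b⟫)) := by ring
    have key : δ ≤ r⁻¹ * ((f v - ⟪m, v⟫) - (f b - ⟪m, b⟫)) := by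
      have hq := hmid.trans hcombo
      rw [hexp] at hq
      linarith
    have key2 := mul_le_mul_of_nonneg_left key hr0.le
    have key3 : r * (r⁻¹ * ((f v - ⟪m, v⟫) - (f b - ⟪m, b⟫)))
        = (f v - ⟪m, v⟫) - (f b - ⟪m, b⟫) := by
      rw [← mul_assoc, hrr, one_mul]
    rw [key3] at key2
    linarith [key2]
  · refine ⟨1, one_pos, ?_⟩
    intro v hv h1
    exfalso
    apply hne
    have hn0 : ‖v - b‖ ≠ 0 := by intro h; rw [h] at h1; linarith
    refine ⟨‖v - b‖⁻¹ • (v - b), Submodule.smul_mem _ _ (Submodule.sub_mem _ hv hb), ?_⟩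
    have : ‖‖v - b‖⁻¹ • (v - b)‖ = 1 := by
      rw [norm_smul, Real.norm_eq_abs, abs_of_nonneg (inv_nonneg.mpr (norm_nonneg _)),
        inv_mul_cancel₀ hn0]
    simpa [Metric.mem_sphere, dist_eq_norm] using this

end Aux

/-- Abstract abelian convexity along an orbit: for a Kempf-Ness function `Ψ` of an
abelian group `𝔞` (a finite-dimensional real inner product space, acting additively on a
Hausdorff space `X`), the image under the gradient map `μ` of the orbit of `x` is an open
convex subset of the affine subspace `μ(x) + 𝔞ₓ^⊥`, where `𝔞ₓ` is the stabilizer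
subalgebra of `x`. -/
theorem stmt_5 {𝔞 : Type*} [NormedAddCommGroup 𝔞] [InnerProductSpace ℝ 𝔞]
    [FiniteDimensional ℝ 𝔞] {X : Type*} [TopologicalSpace X] [T2Space X]
    [AddAction 𝔞 X] (hact : Continuous fun p : 𝔞 × X => p.1 +ᵥ p.2)
    (x : X) (Ψ : X → 𝔞 → ℝ) (μ : X → 𝔞)
    (s : Submodule ℝ 𝔞)
    (hs : ∀ ξ : 𝔞, ξ ∈ s ↔ ∀ t : ℝ, (t • ξ) +ᵥ x = x)
    (hsmooth : ∀ y : X, ContDiff ℝ (⊤ : ℕ∞) (Ψ y))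
    (hcocycle : ∀ (y : X) (v w : 𝔞), Ψ y v + Ψ (v +ᵥ y) w = Ψ y (v + w))
    (hpos : ∀ v w : 𝔞, w ∉ s →
      0 < deriv (deriv (fun t : ℝ => Ψ x (v + t • w))) 0)
    (hzero : ∀ v w : 𝔞, w ∈ s →
      deriv (deriv (fun t : ℝ => Ψ x (v + t • w))) 0 = 0)
    (hμ : ∀ (y : X) (ξ : 𝔞), ⟪μ y, ξ⟫ = deriv (fun t : ℝ => Ψ y (t • ξ)) 0) :
    Convex ℝ (Set.range fun v : 𝔞 => μ (v +ᵥ x)) ∧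
    (Set.range fun v : 𝔞 => μ (v +ᵥ x)) ⊆ {y : 𝔞 | ∃ w ∈ sᗮ, y = μ x + w} ∧
    IsOpen {w : sᗮ | μ x + (w : 𝔞) ∈ Set.range fun v : 𝔞 => μ (v +ᵥ x)} := by
  set f := Ψ x with hfdef
  have hf : ContDiff ℝ (⊤ : ℕ∞) f := hsmooth x
  set c := μ x with hcdef
  -- the Kempf-Ness function on the orbit in terms of f
  have hΨv : ∀ v u : 𝔞, Ψ (v +ᵥ x) u = f (v + u) - f v := by
    intro v u
    have := hcocycle x v u
    linarith
  -- the moment map along the orbit is the gradient of f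
  have hμv : ∀ (v ξ : 𝔞), ⟪μ (v +ᵥ x), ξ⟫ = fderiv ℝ f v ξ := by
    intro v ξ
    rw [hμ (v +ᵥ x) ξ]
    have e : (fun t : ℝ => Ψ (v +ᵥ x) (t • ξ)) = fun t : ℝ => f (v + t • ξ) - f v :=
      funext fun t => hΨv v (t • ξ)
    rw [e, deriv_sub_const]
    have := (KNlineD f hf v ξ 0).deriv
    simpa using this
  have hμx : ∀ ξ : 𝔞, ⟪c, ξ⟫ = fderiv ℝ f 0 ξ := by
    intro ξ
    rw [hcdef, hμ x ξ]
    have e : (fun t : ℝ => Ψ x (t • ξ)) = fun t : ℝ => f (0 + t • ξ) := by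
      funext t; rw [← hfdef, zero_add]
    rw [e]
    have := (KNlineD f hf 0 ξ 0).deriv
    rw [this]
    norm_num
  -- characterization of the image of the orbit
  have hRmem : ∀ m : 𝔞, (m ∈ Set.range fun v : 𝔞 => μ (v +ᵥ x)) ↔
      ∃ v : 𝔞, ∀ ξ, ⟪m, ξ⟫ = fderiv ℝ f v ξ := by
    intro m
    constructor
    · rintro ⟨v, rfl⟩
      exact ⟨v, hμv v⟩
    · rintro ⟨v, hv⟩
      refine ⟨v, ?_⟩
      apply ext_inner_right ℝ
      intro ξ
      rw [hμv v ξ, hv ξ]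
  -- f is affine along stabilizer directions
  have hstabfix : ∀ w ∈ s, ∀ t : ℝ, (t • w) +ᵥ x = x := fun w hw => (hs w).mp hw
  have hkey : ∀ w ∈ s, ∀ (v : 𝔞) (t : ℝ), f (v + t • w) = f (t • w) + f v := by
    intro w hw v t
    have h1 := hcocycle x (t • w) v
    rw [hstabfix w hw t] at h1
    have h2 : f (t • w + v) = f (v + t • w) := by rw [add_comm]
    linarith
  have hf0 : f 0 = 0 := by
    have := hkey 0 (zero_mem s) 0 0
    simp only [smul_zero, add_zero] at this
    linarith
  have hlin : ∀ w ∈ s, ∀ t : ℝ, f (t • w) = t * ⟪c, w⟫ := by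
    intro w hw
    have hgd : ∀ t : ℝ, HasDerivAt (fun t : ℝ => f (t • w)) (fderiv ℝ f (t • w) w) t := by
      intro t
      have := KNlineD f hf 0 w t
      simpa using this
    have hgadd : ∀ t u : ℝ, f ((t + u) • w) = f (t • w) + f (u • w) := by
      intro t u
      have h1 := hkey w hw (t • w) u
      rw [add_smul, add_comm (t • w) (u • w)]
      rw [add_comm (t • w) (u • w)] at h1
      linarith
    have hgderiv : ∀ t : ℝ, deriv (fun t : ℝ => f (t • w)) t
        = deriv (fun t : ℝ => f (t • w)) 0 := by
      intro t
      have e : (fun u : ℝ => f ((t + u) • w)) = fun u : ℝ => f (t • w) + f (u • w) :=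
        funext fun u => hgadd t u
      have l : deriv (fun u : ℝ => f ((t + u) • w)) 0 = deriv (fun t : ℝ => f (t • w)) t := by
        rw [show (fun u : ℝ => f ((t + u) • w)) = fun u : ℝ => f ((t + u) • w) from rfl]
        rw [deriv_comp_const_add (fun u : ℝ => f (u • w)) t 0, add_zero]
      have r : deriv (fun u : ℝ => f (t • w) + f (u • w)) 0
          = deriv (fun t : ℝ => f (t • w)) 0 := deriv_const_add _
      rw [← l, e, r]
    have hL : deriv (fun t : ℝ => f (t • w)) 0 = ⟪c, w⟫ := by
      have h1 : deriv (fun t : ℝ => f (t • w)) 0 = fderiv ℝ f ((0 : ℝ) • w) w :=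
        (hgd 0).deriv
      rw [h1, zero_smul]
      exact (hμx w).symm
    intro t
    have hk : ∀ u : ℝ, deriv (fun t : ℝ => f (t • w) - t * ⟪c, w⟫) u = 0 := by
      intro u
      have hdk : HasDerivAt (fun t : ℝ => f (t • w) - t * ⟪c, w⟫)
          (fderiv ℝ f (u • w) w - ⟪c, w⟫) u := by
        have := (hgd u).sub ((hasDerivAt_id u).mul_const ⟪c, w⟫)
        exact this.congr_deriv (by simp)
      rw [hdk.deriv]
      have h2 : fderiv ℝ f (u • w) w = deriv (fun t : ℝ => f (t • w)) u := (hgd u).deriv.symm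
      rw [h2, hgderiv u, hL]
      ring
    have hdiff : Differentiable ℝ (fun t : ℝ => f (t • w) - t * ⟪c, w⟫) := by
      intro u
      exact ((hgd u).sub ((hasDerivAt_id u).mul_const ⟪c, w⟫)).differentiableAt
    have hconst := is_const_of_deriv_eq_zero hdiff hk t 0
    simp only [zero_smul, hf0, zero_mul, sub_zero] at hconst
    linarith
  have hA : ∀ w ∈ s, ∀ (v : 𝔞) (t : ℝ), f (v + t • w) = f v + t * ⟪c, w⟫ := by
    intro w hw v t
    rw [hkey w hw v t, hlin w hw t]
    ring
  -- translated positivity of second derivatives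
  have hP : ∀ v w : 𝔞, w ∉ s → ∀ t₀ : ℝ, 0 < deriv (deriv fun t : ℝ => f (v + t • w)) t₀ := by
    intro v w hw t₀
    have e : (fun t : ℝ => f (v + t • w))
        = fun t : ℝ => (fun τ : ℝ => f ((v + t₀ • w) + τ • w)) (t - t₀) := by
      funext t
      simp only
      congr 1
      rw [sub_smul]
      abel
    rw [e]
    have e1 : (deriv fun t : ℝ => (fun τ : ℝ => f ((v + t₀ • w) + τ • w)) (t - t₀))
        = fun t : ℝ => deriv (fun τ : ℝ => f ((v + t₀ • w) + τ • w)) (t - t₀) :=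
      funext fun t => deriv_comp_sub_const (fun τ : ℝ => f ((v + t₀ • w) + τ • w)) t₀ t
    rw [e1]
    have e2 : deriv (fun t : ℝ => deriv (fun τ : ℝ => f ((v + t₀ • w) + τ • w)) (t - t₀)) t₀
        = deriv (deriv fun τ : ℝ => f ((v + t₀ • w) + τ • w)) (t₀ - t₀) :=
      deriv_comp_sub_const _ _ _
    rw [e2, sub_self]
    exact hpos (v + t₀ • w) w hw
  -- compatibility on s for members of the range
  have hscompat : ∀ m : 𝔞, (∃ v : 𝔞, ∀ ξ, ⟪m, ξ⟫ = fderiv ℝ f v ξ) →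
      ∀ w ∈ s, ⟪m, w⟫ = ⟪c, w⟫ := by
    rintro m ⟨v, hv⟩ w hw
    rw [hv w, KNfderiv_s f s c hf hA hw v]
  refine ⟨?_, ?_, ?_⟩
  · -- convexity
    intro m₁ hm₁ m₂ hm₂ κ l hκ hl hκl
    obtain ⟨a₁, ha₁⟩ := (hRmem m₁).mp hm₁
    obtain ⟨a₂, ha₂⟩ := (hRmem m₂).mp hm₂
    rcases eq_or_lt_of_le hκ with hev | hκpos
    · have hl1 : l = 1 := by linarith
      simpa [← hev, hl1] using hm₂
    rcases eq_or_lt_of_le hl with hev | hlpos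
    · have hκ1 : κ = 1 := by linarith
      simpa [← hev, hκ1] using hm₁
    set m := κ • m₁ + l • m₂ with hmdef
    have hm_s : ∀ w ∈ s, ⟪m, w⟫ = ⟪c, w⟫ := by
      intro w hw
      have e1 : ⟪m₁, w⟫ = ⟪c, w⟫ := hscompat m₁ ⟨a₁, ha₁⟩ w hw
      have e2 : ⟪m₂, w⟫ = ⟪c, w⟫ := hscompat m₂ ⟨a₂, ha₂⟩ w hw
      rw [hmdef, inner_add_left, real_inner_smul_left, real_inner_smul_left, e1, e2]
      linear_combination (⟪c, w⟫ : ℝ) * hκl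
    obtain ⟨b₁, hb₁, hcb₁⟩ := KNcritProj f s c hf hA hP m₁ a₁ ha₁
    obtain ⟨δ, hδ, hgrow⟩ := KNgrowth f s c hf hA hP m₁ b₁ hb₁ hcb₁
    have hA2min : ∀ v : 𝔞, f a₂ - ⟪m₂, a₂⟫ ≤ f v - ⟪m₂, v⟫ :=
      fun v => (KNglobMin f s c hf hA hP m₂ a₂ ha₂ v).1
    have hsplit : ∀ u : 𝔞, f u - ⟪m, u⟫ = κ * (f u - ⟪m₁, u⟫) + l * (f u - ⟪m₂, u⟫) := by
      intro u
      rw [hmdef, inner_add_left, real_inner_smul_left, real_inner_smul_left]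
      linear_combination (f u) * hκl.symm
    set R₀ := max 1 (((f b₁ - ⟪m, b₁⟫) - κ * (f b₁ - ⟪m₁, b₁⟫) - l * (f a₂ - ⟪m₂, a₂⟫))
      / (κ * δ) + 1) with hR₀def
    apply (hRmem m).mpr
    apply KNexistsCrit f s c hf hA m b₁ R₀ hm_s hb₁
    intro v hv hR
    have hr1 : (1 : ℝ) ≤ ‖v - b₁‖ := le_trans (le_max_left _ _) hR
    have hκδ : (0 : ℝ) < κ * δ := mul_pos hκpos hδ
    have hRbig : ((f b₁ - ⟪m, b₁⟫) - κ * (f b₁ - ⟪m₁, b₁⟫) - l * (f a₂ - ⟪m₂, a₂⟫))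
        / (κ * δ) + 1 ≤ ‖v - b₁‖ := le_trans (le_max_right _ _) hR
    have hmul : (f b₁ - ⟪m, b₁⟫) - κ * (f b₁ - ⟪m₁, b₁⟫) - l * (f a₂ - ⟪m₂, a₂⟫) + κ * δ
        ≤ κ * δ * ‖v - b₁‖ := by
      have h6 : (κ * δ) * (((f b₁ - ⟪m, b₁⟫) - κ * (f b₁ - ⟪m₁, b₁⟫)
          - l * (f a₂ - ⟪m₂, a₂⟫)) / (κ * δ) + 1)
          = (f b₁ - ⟪m, b₁⟫) - κ * (f b₁ - ⟪m₁, b₁⟫) - l * (f a₂ - ⟪m₂, a₂⟫) + κ * δ := by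
        field_simp
      have h7 := mul_le_mul_of_nonneg_left hRbig hκδ.le
      rw [h6] at h7
      exact h7
    have hF1 : κ * (f b₁ - ⟪m₁, b₁⟫) + κ * δ * ‖v - b₁‖ ≤ κ * (f v - ⟪m₁, v⟫) := by
      have h8 := mul_le_mul_of_nonneg_left (hgrow v hv hr1) hκpos.le
      calc κ * (f b₁ - ⟪m₁, b₁⟫) + κ * δ * ‖v - b₁‖
          = κ * (f b₁ - ⟪m₁, b₁⟫ + δ * ‖v - b₁‖) := by ring
        _ ≤ κ * (f v - ⟪m₁, v⟫) := h8
    have hF2 : l * (f a₂ - ⟪m₂, a₂⟫) ≤ l * (f v - ⟪m₂, v⟫) :=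
      mul_le_mul_of_nonneg_left (hA2min v) hlpos.le
    have hsv := hsplit v
    linarith
  · -- subset of affine subspace
    rintro m ⟨v, rfl⟩
    refine ⟨μ (v +ᵥ x) - μ x, ?_, (add_sub_cancel (μ x) (μ (v +ᵥ x))).symm⟩
    rw [Submodule.mem_orthogonal]
    intro u hu
    have h1 : ⟪μ (v +ᵥ x), u⟫ = ⟪c, u⟫ := by
      rw [hμv v u, KNfderiv_s f s c hf hA hu v]
    rw [real_inner_comm, inner_sub_left, h1, ← hcdef, sub_self]
  · -- openness
    rw [Metric.isOpen_iff]
    intro w₀ hw₀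
    obtain ⟨a, ha⟩ := (hRmem _).mp hw₀
    obtain ⟨b, hb, hcb⟩ := KNcritProj f s c hf hA hP (μ x + ↑w₀) a ha
    obtain ⟨δ, hδ, hgrow⟩ := KNgrowth f s c hf hA hP (μ x + ↑w₀) b hb hcb
    refine ⟨δ / 2, by positivity, ?_⟩
    intro w hwball
    have hdist : ‖(w : 𝔞) - (w₀ : 𝔞)‖ < δ / 2 := by
      rw [Metric.mem_ball, Subtype.dist_eq, dist_eq_norm] at hwball
      exact hwball
    show μ x + (w : 𝔞) ∈ Set.range fun v : 𝔞 => μ (v +ᵥ x)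
    apply (hRmem _).mpr
    set m := μ x + (w : 𝔞) with hm'def
    set m₀ := μ x + (w₀ : 𝔞) with hm₀def
    have hdm : m - m₀ = (w : 𝔞) - (w₀ : 𝔞) := by
      rw [hm'def, hm₀def]; abel
    have hm_s : ∀ p ∈ s, ⟪m, p⟫ = ⟪c, p⟫ := by
      intro p hp
      have h2 : ⟪(w : 𝔞), p⟫ = 0 := by
        rw [real_inner_comm]
        exact w.2 p hp
      rw [hm'def, inner_add_left, h2, add_zero, hcdef]
    apply KNexistsCrit f s c hf hA m b 1 hm_s hb
    intro v hv h1r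
    have hg := hgrow v hv h1r
    have hcs1 : ⟪m - m₀, v - b⟫ ≤ ‖m - m₀‖ * ‖v - b‖ := real_inner_le_norm _ _
    have hnorm : ‖m - m₀‖ < δ / 2 := by rw [hdm]; exact hdist
    have e1 : ⟪m, v⟫ = ⟪m₀, v⟫ + ⟪m - m₀, v⟫ := by rw [inner_sub_left]; ring
    have e2 : ⟪m - m₀, v⟫ = ⟪m - m₀, b⟫ + ⟪m - m₀, v - b⟫ := by
      rw [inner_sub_right]; ring
    have e3 : ⟪m, b⟫ = ⟪m₀, b⟫ + ⟪m - m₀, b⟫ := by rw [inner_sub_left]; ring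
    have hb1 : ‖m - m₀‖ * ‖v - b‖ ≤ δ / 2 * ‖v - b‖ :=
      mul_le_mul_of_nonneg_right hnorm.le (norm_nonneg _)
    have hb2 : δ / 2 ≤ δ / 2 * ‖v - b‖ := by
      have := mul_le_mul_of_nonneg_left h1r (by positivity : (0 : ℝ) ≤ δ / 2)
      simpa using this
    have hb3 : δ / 2 * ‖v - b‖ + δ / 2 * ‖v - b‖ ≤ δ * ‖v - b‖ := by
      have : δ / 2 * ‖v - b‖ + δ / 2 * ‖v - b‖ = δ * ‖v - b‖ := by ring
      linarith [this.le]
    linarith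
end

section
/- Let β be a Hermitian matrix on ℂ^{n+1} with eigenvalues c₀ < … < c_r and eigenspaces V₀, …, V_r, and let [z] ∈ ℙⁿ(ℂ). Write z = z₀ + … + z_r with z_i ∈ V_i, and let j be the largest index with z_j ≠ 0. Then lim_{t → +∞} [exp(tβ) z] = [z_j] in ℙⁿ(ℂ). -/
open scoped LinearAlgebra.Projectivization

/-- The quotient topology on projective space. -/
noncomputable instance projectivizationTopology {K V : Type*} [DivisionRing K]
    [AddCommGroup V] [Module K V] [TopologicalSpace V] :
    TopologicalSpace (ℙ K V) := by
  unfold Projectivization; infer_instance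

/-!
`exp(tβ)` multiplies the eigenvector `z_i` by `e^{t c_i}`. Rescaling by `e^{-t c_j}`, which does
not change the projective class, leaves `Σ_{i ≤ j} e^{t (c_i - c_j)} z_i`, whose terms with
`i < j` decay because `c_i < c_j`; so the rescaled vectors tend to `z_j ≠ 0`, and `[·]` is
continuous away from `0`.
-/

open Filter Topology

theorem Projectivization.tendsto_mk {K V α : Type*} [DivisionRing K] [AddCommGroup V]
    [Module K V] [TopologicalSpace V] {l : Filter α} {f : α → V} (hf : ∀ a, f a ≠ 0)
    {v : V} (hv : v ≠ 0) (h : Tendsto f l (𝓝 v)) :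
    Tendsto (fun a => mk K (f a) (hf a)) l (𝓝 (mk K v hv)) :=
  (continuous_quotient_mk'.tendsto ⟨v, hv⟩).comp (tendsto_subtype_rng.2 h)

theorem NormedSpace.exp_apply_of_apply_eq_smul {𝕂 E : Type*} [RCLike 𝕂] [NormedAddCommGroup E]
    [NormedSpace 𝕂 E] [CompleteSpace E] {A : E →L[𝕂] E} {v : E} {a : 𝕂} (h : A v = a • v) :
    exp A v = exp a • v := by
  have hpow (k : ℕ) : (A ^ k) v = a ^ k • v := by
    induction k with
    | zero => simp
    | succ k ih => rw [pow_succ', mul_apply_eq_comp, ih, map_smul, h, smul_smul, pow_succ]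
  have hA := (exp_series_hasSum_exp' (𝕂 := 𝕂) A).mapL (ContinuousLinearMap.apply 𝕂 E v)
  have ha := (exp_series_hasSum_exp' (𝕂 := 𝕂) a).smul_const v
  simp only [ContinuousLinearMap.apply_apply, smul_apply, hpow, smul_smul] at hA
  simp only [smul_eq_mul] at ha
  exact hA.unique ha

theorem Complex.tendsto_exp_ofReal_mul_atTop_of_neg {a : ℝ} (ha : a < 0) :
    Tendsto (fun t : ℝ => exp (t * a)) atTop (𝓝 0) :=
  tendsto_exp_comap_re_atBot.comp <| tendsto_comap_iff.2 <| by
    simpa [Function.comp_def, ← ofReal_mul] using tendsto_id.atTop_mul_const_of_neg ha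

section Eigenvectors

variable {ι E : Type*} [Fintype ι]

theorem exp_smul_apply_sum_eigenvectors [NormedAddCommGroup E] [NormedSpace ℂ E]
    [CompleteSpace E] (β : E →L[ℂ] E) (c : ι → ℝ) (zc : ι → E)
    (heig : ∀ i, β (zc i) = (c i : ℂ) • zc i) (t μ : ℝ) :
    NormedSpace.exp ((t : ℂ) • β) (∑ i, zc i) =
      Complex.exp (t * μ) • ∑ i, Complex.exp (t * (c i - μ)) • zc i := by
  rw [map_sum, Finset.smul_sum]
  refine Finset.sum_congr rfl fun i _ => ?_
  rw [NormedSpace.exp_apply_of_apply_eq_smul (𝕂 := ℂ) (a := t * c i), ← Complex.exp_eq_exp_ℂ,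
    smul_smul, ← Complex.exp_add]
  · ring_nf
  · rw [smul_apply, heig, smul_smul]

theorem tendsto_sum_exp_mul_sub_smul [LinearOrder ι] [AddCommMonoid E] [TopologicalSpace E]
    [ContinuousAdd E] [Module ℂ E] [ContinuousSMul ℂ E] {c : ι → ℝ} (hc : StrictMono c)
    {zc : ι → E} {j : ι} (hmax : ∀ i, j < i → zc i = 0) :
    Tendsto (fun t : ℝ => ∑ i, Complex.exp (t * (c i - c j)) • zc i) atTop (𝓝 (zc j)) := by
  classical
  rw [← Fintype.sum_pi_single' j (zc j)]
  refine tendsto_finsetSum _ fun i _ => ?_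
  rcases lt_trichotomy i j with hij | rfl | hij
  · rw [Pi.single_eq_of_ne hij.ne]
    have := Complex.tendsto_exp_ofReal_mul_atTop_of_neg (sub_neg.2 (hc hij))
    simpa using this.smul_const (zc i)
  · simpa using tendsto_const_nhds
  · simpa [Pi.single_eq_of_ne hij.ne', hmax i hij] using tendsto_const_nhds

end Eigenvectors

theorem stmt_15_general {n r : ℕ}
    (β : EuclideanSpace ℂ (Fin (n + 1)) →L[ℂ] EuclideanSpace ℂ (Fin (n + 1)))
    (c : Fin (r + 1) → ℝ) (hmono : StrictMono c)
    (z : EuclideanSpace ℂ (Fin (n + 1)))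
    (zc : Fin (r + 1) → EuclideanSpace ℂ (Fin (n + 1)))
    (hdecomp : z = ∑ i, zc i)
    (heig : ∀ i, β (zc i) = (c i : ℂ) • zc i)
    (j : Fin (r + 1)) (hj : zc j ≠ 0) (hmax : ∀ i, j < i → zc i = 0)
    (hnz : ∀ t : ℝ, NormedSpace.exp ((t : ℂ) • β) z ≠ 0) :
    Filter.Tendsto
      (fun t : ℝ => Projectivization.mk ℂ (NormedSpace.exp ((t : ℂ) • β) z) (hnz t))
      Filter.atTop (nhds (Projectivization.mk ℂ (zc j) hj)) := by
  set w : ℝ → EuclideanSpace ℂ (Fin (n + 1)) :=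
    fun t => ∑ i, Complex.exp (t * (c i - c j)) • zc i
  have hexp (t : ℝ) : NormedSpace.exp ((t : ℂ) • β) z = Complex.exp (t * c j) • w t := by
    rw [hdecomp, exp_smul_apply_sum_eigenvectors β c zc heig t (c j)]
  have hw (t : ℝ) : w t ≠ 0 := fun h0 => hnz t (by rw [hexp t, h0, smul_zero])
  have hmk (t : ℝ) : Projectivization.mk ℂ _ (hnz t) = Projectivization.mk ℂ (w t) (hw t) :=
    (Projectivization.mk_eq_mk_iff _ _ _ _ _).2
      ⟨Units.mk0 _ (Complex.exp_ne_zero _), (hexp t).symm⟩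
  simpa only [hmk] using
    Projectivization.tendsto_mk hw hj (tendsto_sum_exp_mul_sub_smul hmono hmax)

/-- Let `β` be Hermitian on `ℂ^{n+1}` with eigenvalues `c 0 < … < c r` and write
`z = z₀ + … + z_r` with `z_i` in the eigenspace of `c i`.  If `j` is the largest index
with `z_j ≠ 0`, then `[exp(tβ) z] → [z_j]` in `ℙⁿ(ℂ)` as `t → +∞`. -/
theorem stmt_15 {n r : ℕ}
    (β : EuclideanSpace ℂ (Fin (n + 1)) →L[ℂ] EuclideanSpace ℂ (Fin (n + 1)))
    (hherm : ∀ z w : EuclideanSpace ℂ (Fin (n + 1)),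
      (inner ℂ (β z) w : ℂ) = inner ℂ z (β w))
    (c : Fin (r + 1) → ℝ) (hmono : StrictMono c)
    (z : EuclideanSpace ℂ (Fin (n + 1)))
    (zc : Fin (r + 1) → EuclideanSpace ℂ (Fin (n + 1)))
    (hdecomp : z = ∑ i, zc i)
    (heig : ∀ i, β (zc i) = (c i : ℂ) • zc i)
    (j : Fin (r + 1)) (hj : zc j ≠ 0) (hmax : ∀ i, j < i → zc i = 0)
    (hnz : ∀ t : ℝ, NormedSpace.exp ((t : ℂ) • β) z ≠ 0) :
    Filter.Tendsto
      (fun t : ℝ => Projectivization.mk ℂ (NormedSpace.exp ((t : ℂ) • β) z) (hnz t))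
      Filter.atTop (nhds (Projectivization.mk ℂ (zc j) hj)) :=
  stmt_15_general β c hmono z zc hdecomp heig j hj hmax hnz
end
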